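/- arXiv:2201.11424 — 6 statements merged into one kernel-verified Lean document; each statement's English description precedes it below -/
import Mathlib

section
/- Under the weighted stochastic block model, the path-graph moment matrix factors multilinearly: for any four distinct nodes 1, 2, 3, 4 and all indices l_1, l_2 ∈ {1,…,l}, E(α_{l_1}(X_{1,2}) φ(X_{1,3}) α_{l_2}(X_{3,4})) = (G H_φ Gᵀ)_{l_1,l_2}, where (H_φ)_{z_1,z_2} := p_{z_1} p_{z_2} φ_{z_1,z_2} and φ_{z_1,z_2} := E(φ(X_{i,j}) | Z_i = z_1, Z_j = z_2). -/
open MeasureTheory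

/-- The weighted stochastic block model on `n` nodes with `r` latent communities:
community labels `Z i` are i.i.d. with distribution `p`; edge weights `X i j = X j i`
are, conditionally on the labels, mutually independent with conditional CDF
`F (Z i) (Z j)` (encoded through the joint conditional CDF factorization `X_cond`). -/
structure SBM (Ω : Type) [MeasurableSpace Ω] (ℙ : Measure Ω) (n r : ℕ) where
  /-- the community distribution -/
  p : Fin r → ℝ
  /-- the community labels -/
  Z : Fin n → Ω → Fin r
  /-- the edge weights -/
  X : Fin n → Fin n → Ω → ℝ
  /-- the conditional CDFs -/
  F : Fin r → Fin r → ℝ → ℝ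
  prob : IsProbabilityMeasure ℙ
  p_pos : ∀ z, 0 < p z
  p_sum : ∑ z, p z = 1
  Z_meas : ∀ i, Measurable (Z i)
  X_meas : ∀ i j, Measurable (X i j)
  X_symm : ∀ i j, X i j = X j i
  F_symm : ∀ z₁ z₂, F z₁ z₂ = F z₂ z₁
  /-- the labels are i.i.d. with distribution `p` -/
  Z_iid : ∀ z : Fin n → Fin r,
    ℙ {ω | ∀ i, Z i ω = z i} = ENNReal.ofReal (∏ i, p (z i))
  /-- conditionally on the labels, the edge weights are mutually independent and the
  conditional CDF of `X i j` given `Z i = z i`, `Z j = z j` is `F (z i) (z j)` -/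
  X_cond : ∀ (z : Fin n → Fin r) (S : Finset (Fin n × Fin n)),
    (∀ q ∈ S, q.1 < q.2) → ∀ x : Fin n × Fin n → ℝ,
      ℙ ({ω | ∀ q ∈ S, X q.1 q.2 ω ≤ x q} ∩ {ω | ∀ i, Z i ω = z i})
        = ENNReal.ofReal ((∏ q ∈ S, F (z q.1) (z q.2) (x q)) * ∏ i, p (z i))

/-!
Conditionally on the whole label vector `Z = z`, the edge weights are independent: the CDF
factorisation `X_cond` is exactly independence on the π-systems `{X ≤ t}`. The conditional law
of `X i j` only depends on `(z i, z j)`, so on each atom `{Z = z}` the path moment splits into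
three edge means `m(z i₁, z i₂) m(z i₁, z i₃) m(z i₃, z i₄)`, where `m(a, b)` is the mean given
`Z i = a, Z j = b`. Averaging over the i.i.d. labels of the four distinct nodes gives
`∑ p_a p_b p_c p_d m(a, b) m(a, c) m(c, d)`, and summing out the labels `b` and `d` of the two
end nodes produces the entries of `G`.
-/

namespace MeasureTheory

open ProbabilityTheory Set

variable {Ω : Type*} [MeasurableSpace Ω] {μ : Measure Ω}

theorem setIntegral_preimage_finset_eq_sum {β : Type*} [MeasurableSpace β]
    [MeasurableSingletonClass β] {Y : Ω → β} (hY : Measurable Y) (T : Finset β)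
    {F : Ω → ℝ} (hF : Integrable F μ) :
    ∫ ω in Y ⁻¹' T, F ω ∂μ = ∑ b ∈ T, ∫ ω in Y ⁻¹' {b}, F ω ∂μ := by
  rw [← biUnion_preimage_singleton]
  exact integral_biUnion_finset T (fun b _ => hY (measurableSet_singleton b))
    (pairwiseDisjoint_fiber Y T) fun b _ => hF.integrableOn

theorem setIntegral_preimage_finset_eq_mul {β : Type*} [MeasurableSpace β]
    [MeasurableSingletonClass β] [IsFiniteMeasure μ] {Y : Ω → β} (hY : Measurable Y)
    (T : Finset β) {F : Ω → ℝ} (hF : Integrable F μ) (c : ℝ)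
    (h : ∀ b ∈ T, ∫ ω in Y ⁻¹' {b}, F ω ∂μ = μ.real (Y ⁻¹' {b}) * c) :
    ∫ ω in Y ⁻¹' T, F ω ∂μ = μ.real (Y ⁻¹' T) * c := by
  rw [setIntegral_preimage_finset_eq_sum hY T hF, Finset.sum_congr rfl h, ← Finset.sum_mul,
    sum_measureReal_preimage_singleton T fun b _ => hY (measurableSet_singleton b)]

theorem setIntegral_eq_measureReal_mul_integral_cond [IsFiniteMeasure μ] (s : Set Ω)
    (F : Ω → ℝ) : ∫ ω in s, F ω ∂μ = μ.real s * ∫ ω, F ω ∂μ[|s] := by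
  rcases eq_or_ne (μ s) 0 with hs | hs
  · simp [Measure.restrict_eq_zero.2 hs, measureReal_def, hs]
  · rw [ProbabilityTheory.cond, integral_smul_measure, ENNReal.toReal_inv, smul_eq_mul,
      ← measureReal_def,
      mul_inv_cancel_left₀ (by simp [measureReal_def, ENNReal.toReal_eq_zero_iff, hs])]

end MeasureTheory

namespace ProbabilityTheory

open Set

variable {Ω : Type*} [MeasurableSpace Ω] {μ : Measure Ω}

theorem iIndepFun_of_measure_biInter_preimage_Iic {ι : Type*} {Y : ι → Ω → ℝ}
    (hY : ∀ i, Measurable (Y i))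
    (h : ∀ (S : Finset ι) (x : ι → ℝ),
      μ (⋂ i ∈ S, Y i ⁻¹' Iic (x i)) = ∏ i ∈ S, μ (Y i ⁻¹' Iic (x i))) :
    iIndepFun Y μ := by
  rw [iIndepFun_iff_iIndep]
  refine iIndepSets.iIndep (fun i => (hY i).comap_le)
    (fun i => {s | ∃ t ∈ range Iic, Y i ⁻¹' t = s}) (fun i => isPiSystem_Iic.comap (Y i))
    (fun i => ?_) ?_
  · rw [BorelSpace.measurable_eq (α := ℝ), borel_eq_generateFrom_Iic,
      MeasurableSpace.comap_generateFrom]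
    rfl
  · rw [iIndepSets_iff]
    intro S f hf
    have hf' : ∀ i ∈ S, ∃ a, Y i ⁻¹' Iic a = f i := fun i hi => by
      obtain ⟨_, ⟨a, rfl⟩, hfi⟩ := hf i hi
      exact ⟨a, hfi⟩
    choose! x hx using hf'
    rw [← Finset.prod_congr rfl fun i hi => congrArg μ (hx i hi),
      ← h S x, iInter₂_congr fun i hi => hx i hi]

theorem iIndepFun.integral_comp_mul_comp_mul_comp {ι : Type*} {Y : ι → Ω → ℝ}
    (hind : iIndepFun Y μ) (hY : ∀ i, Measurable (Y i)) {i j k : ι}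
    (hij : i ≠ j) (hik : i ≠ k) (hjk : j ≠ k) {f g h : ℝ → ℝ}
    (hf : Measurable f) (hg : Measurable g) (hh : Measurable h) :
    ∫ ω, f (Y i ω) * g (Y j ω) * h (Y k ω) ∂μ
      = (∫ ω, f (Y i ω) ∂μ) * (∫ ω, g (Y j ω) ∂μ) * ∫ ω, h (Y k ω) ∂μ := by
  rw [(hind.indepFun_prodMk hY i j k hik hjk).integral_fun_comp_mul_comp
      (f := fun p : ℝ × ℝ => f p.1 * g p.2) (by fun_prop) (by fun_prop)
      (by fun_prop) hh.aestronglyMeasurable,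
    (hind.indepFun hij).integral_fun_comp_mul_comp (by fun_prop) (by fun_prop)
      hf.aestronglyMeasurable hg.aestronglyMeasurable]

end ProbabilityTheory

theorem Matrix.mul_mul_transpose_apply {m k R : Type*} [Fintype k] [CommSemiring R]
    (G : Matrix m k R) (H : Matrix k k R) (i j : m) :
    (G * H * G.transpose) i j = ∑ a, ∑ c, G i a * H a c * G j c := by
  simp only [Matrix.mul_apply, Matrix.transpose_apply, Finset.sum_mul]
  exact Finset.sum_comm

theorem sum_path_eq_sum_sum_mul {ι : Type*} [Fintype ι] (p : ι → ℝ) (m₁ m₂ m₃ : ι → ι → ℝ) :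
    ∑ a, ∑ b, ∑ c, ∑ d, p a * p b * p c * p d * (m₁ a b * m₂ a c * m₃ c d)
      = ∑ a, ∑ c, (∑ b, p b * m₁ a b) * (p a * p c * m₂ a c) * ∑ d, p d * m₃ c d := by
  refine Finset.sum_congr rfl fun a _ => ?_
  rw [Finset.sum_comm]
  refine Finset.sum_congr rfl fun c _ => ?_
  simp only [Finset.sum_mul, Finset.mul_sum]
  rw [Finset.sum_comm]
  refine Finset.sum_congr rfl fun b _ => Finset.sum_congr rfl fun d _ => ?_
  ring

namespace SBM

open ProbabilityTheory Set

abbrev Edge (n : ℕ) := {q : Fin n × Fin n // q.1 < q.2}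

def Edge.ofNe {n : ℕ} {i j : Fin n} (h : i ≠ j) : Edge n :=
  ⟨(min i j, max i j), min_lt_max.2 h⟩

theorem Edge.ofNe_eq_ofNe_iff {n : ℕ} {i j k l : Fin n} (hij : i ≠ j) (hkl : k ≠ l) :
    Edge.ofNe hij = Edge.ofNe hkl ↔ (i = k ∧ j = l) ∨ (i = l ∧ j = k) := by
  rw [Edge.ofNe, Edge.ofNe, Subtype.mk.injEq, Prod.mk.injEq]
  rcases le_total i j with h1 | h1 <;> rcases le_total k l with h2 | h2 <;>
    simp only [min_eq_left, min_eq_right, max_eq_left, max_eq_right, h1, h2] <;> omega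

variable {Ω : Type} [MeasurableSpace Ω] {μ : Measure Ω} {n r : ℕ} (sbm : SBM Ω μ n r)

def labels (ω : Ω) : Fin n → Fin r := fun i => sbm.Z i ω

theorem measurable_labels : Measurable sbm.labels := measurable_pi_lambda _ sbm.Z_meas

theorem measure_labels_preimage (z : Fin n → Fin r) :
    μ (sbm.labels ⁻¹' {z}) = ENNReal.ofReal (∏ i, sbm.p (z i)) := by
  rw [← sbm.Z_iid z]
  congr 1
  ext ω
  simp [labels, funext_iff]

theorem measure_labels_preimage_ne_zero (z : Fin n → Fin r) : μ (sbm.labels ⁻¹' {z}) ≠ 0 := by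
  rw [measure_labels_preimage]
  exact ENNReal.ofReal_ne_zero_iff.2 (Finset.prod_pos fun i _ => sbm.p_pos (z i))

theorem measure_forall_mem_Z_eq (s : Finset (Fin n)) (w : Fin n → Fin r) :
    μ {ω | ∀ i ∈ s, sbm.Z i ω = w i} = ENNReal.ofReal (∏ i ∈ s, sbm.p (w i)) := by
  classical
  set t : Fin n → Finset (Fin r) := fun i => if i ∈ s then {w i} else Finset.univ
  have hset : {ω | ∀ i ∈ s, sbm.Z i ω = w i} = sbm.labels ⁻¹' ↑(Fintype.piFinset t) := by
    ext ω
    simp only [mem_ofPred_eq, mem_preimage, Finset.mem_coe, Fintype.mem_piFinset, t, labels]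
    refine forall_congr' fun i => ?_
    split_ifs <;> simp [*]
  rw [hset, ← sum_measure_preimage_singleton _
      fun z _ => sbm.measurable_labels (measurableSet_singleton z)]
  simp_rw [measure_labels_preimage]
  rw [← ENNReal.ofReal_sum_of_nonneg fun z _ => Finset.prod_nonneg fun i _ => (sbm.p_pos _).le,
    ← Finset.prod_univ_sum]
  congr 1
  simp only [t, apply_ite (fun u : Finset (Fin r) => ∑ j ∈ u, sbm.p j), Finset.sum_singleton,
    sbm.p_sum]
  rw [Finset.prod_ite_mem, Finset.univ_inter]

theorem measureReal_Z_eq (i : Fin n) (a : Fin r) : μ.real {ω | sbm.Z i ω = a} = sbm.p a := by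
  have h := sbm.measure_forall_mem_Z_eq {i} fun _ => a
  simp only [Finset.mem_singleton, forall_eq, Finset.prod_singleton] at h
  rw [measureReal_def, h, ENNReal.toReal_ofReal (sbm.p_pos a).le]

theorem measureReal_Z_eq_and_Z_eq {i j : Fin n} (hij : i ≠ j) (a b : Fin r) :
    μ.real {ω | sbm.Z i ω = a ∧ sbm.Z j ω = b} = sbm.p a * sbm.p b := by
  have h := sbm.measure_forall_mem_Z_eq {i, j} fun k => if k = i then a else b
  rw [Finset.prod_pair hij, if_pos rfl, if_neg hij.symm] at h
  simp only [Finset.mem_insert, Finset.mem_singleton, forall_eq_or_imp, forall_eq, if_pos,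
    if_neg hij.symm] at h
  rw [measureReal_def, h, ENNReal.toReal_ofReal (mul_pos (sbm.p_pos a) (sbm.p_pos b)).le]

def edgeWeight (e : Edge n) : Ω → ℝ := sbm.X e.1.1 e.1.2

theorem measurable_edgeWeight (e : Edge n) : Measurable (sbm.edgeWeight e) :=
  sbm.X_meas _ _

theorem edgeWeight_ofNe {i j : Fin n} (h : i ≠ j) : sbm.edgeWeight (Edge.ofNe h) = sbm.X i j := by
  rcases le_total i j with hle | hle
  · simp [edgeWeight, Edge.ofNe, hle]
  · simp [edgeWeight, Edge.ofNe, hle, sbm.X_symm j i]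

theorem cond_labels_biInter_edgeWeight_le (z : Fin n → Fin r)
    (S : Finset (Edge n)) (x : Edge n → ℝ) :
    μ[⋂ e ∈ S, sbm.edgeWeight e ⁻¹' Iic (x e) | sbm.labels ⁻¹' {z}]
      = ENNReal.ofReal (∏ e ∈ S, sbm.F (z e.1.1) (z e.1.2) (x e)) := by
  classical
  have := sbm.prob
  have h := sbm.X_cond z (S.map (Function.Embedding.subtype _))
    (fun q hq => by obtain ⟨e, -, rfl⟩ := Finset.mem_map.1 hq; exact e.2)
    fun q => if hq : q.1 < q.2 then x ⟨q, hq⟩ else 0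
  have hset : {ω | ∀ q ∈ S.map (Function.Embedding.subtype _), sbm.X q.1 q.2 ω ≤
      if hq : q.1 < q.2 then x ⟨q, hq⟩ else 0} ∩ {ω | ∀ i, sbm.Z i ω = z i}
      = sbm.labels ⁻¹' {z} ∩ ⋂ e ∈ S, sbm.edgeWeight e ⁻¹' Iic (x e) := by
    ext ω
    simp +contextual [labels, funext_iff, edgeWeight, and_comm]
  have hprod : ∏ q ∈ S.map (Function.Embedding.subtype _),
      sbm.F (z q.1) (z q.2) (if hq : q.1 < q.2 then x ⟨q, hq⟩ else 0)
      = ∏ e ∈ S, sbm.F (z e.1.1) (z e.1.2) (x e) := by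
    rw [Finset.prod_map]
    exact Finset.prod_congr rfl fun e _ => by rw [Function.Embedding.subtype_apply, dif_pos e.2]
  rw [hset, hprod] at h
  rw [cond_apply (sbm.measurable_labels (measurableSet_singleton z)), h,
    ENNReal.ofReal_mul' (Finset.prod_nonneg fun i _ => (sbm.p_pos _).le),
    ← measure_labels_preimage, mul_comm (ENNReal.ofReal _), ENNReal.inv_mul_cancel_left
      (sbm.measure_labels_preimage_ne_zero z) (measure_ne_top _ _)]

theorem cond_labels_edgeWeight_le (z : Fin n → Fin r) (e : Edge n) (t : ℝ) :
    μ[sbm.edgeWeight e ⁻¹' Iic t | sbm.labels ⁻¹' {z}]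
      = ENNReal.ofReal (sbm.F (z e.1.1) (z e.1.2) t) := by
  simpa using sbm.cond_labels_biInter_edgeWeight_le z {e} fun _ => t

theorem iIndepFun_edgeWeight_cond_labels (z : Fin n → Fin r) :
    iIndepFun sbm.edgeWeight μ[|sbm.labels ⁻¹' {z}] := by
  refine iIndepFun_of_measure_biInter_preimage_Iic sbm.measurable_edgeWeight fun S x => ?_
  simp_rw [cond_labels_edgeWeight_le]
  -- `F` is not assumed nonnegative; where it is negative, the event is already null.
  by_cases hneg : ∃ e ∈ S, sbm.F (z e.1.1) (z e.1.2) (x e) < 0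
  · obtain ⟨e, he, hlt⟩ := hneg
    rw [Finset.prod_eq_zero he (ENNReal.ofReal_of_nonpos hlt.le)]
    refine measure_mono_null (biInter_subset_of_mem he) ?_
    rw [cond_labels_edgeWeight_le, ENNReal.ofReal_of_nonpos hlt.le]
  · simp only [not_exists, not_and, not_lt] at hneg
    rw [cond_labels_biInter_edgeWeight_le, ENNReal.ofReal_prod_of_nonneg hneg]

theorem map_cond_labels_edgeWeight_congr (e : Edge n)
    {z z' : Fin n → Fin r} (h₁ : z e.1.1 = z' e.1.1) (h₂ : z e.1.2 = z' e.1.2) :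
    (μ[|sbm.labels ⁻¹' {z}]).map (sbm.edgeWeight e)
      = (μ[|sbm.labels ⁻¹' {z'}]).map (sbm.edgeWeight e) := by
  have := sbm.prob
  have := cond_isProbabilityMeasure (sbm.measure_labels_preimage_ne_zero z)
  refine Measure.ext_of_Iic _ _ fun t => ?_
  rw [Measure.map_apply (sbm.measurable_edgeWeight e) measurableSet_Iic,
    Measure.map_apply (sbm.measurable_edgeWeight e) measurableSet_Iic, cond_labels_edgeWeight_le,
    cond_labels_edgeWeight_le, h₁, h₂]

theorem integral_cond_labels_congr {i j : Fin n} (hij : i ≠ j) {z z' : Fin n → Fin r}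
    (hi : z i = z' i) (hj : z j = z' j) {f : ℝ → ℝ} (hf : Measurable f) :
    ∫ ω, f (sbm.X i j ω) ∂μ[|sbm.labels ⁻¹' {z}]
      = ∫ ω, f (sbm.X i j ω) ∂μ[|sbm.labels ⁻¹' {z'}] := by
  have hagree : ∀ k, (k = i ∨ k = j) → z k = z' k := by
    rintro k (rfl | rfl) <;> assumption
  rw [← sbm.edgeWeight_ofNe hij,
    ← integral_map (sbm.measurable_edgeWeight _).aemeasurable hf.aestronglyMeasurable,
    ← integral_map (sbm.measurable_edgeWeight _).aemeasurable hf.aestronglyMeasurable,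
    sbm.map_cond_labels_edgeWeight_congr _ (hagree _ (min_choice i j)) (hagree _ (max_choice i j))]

noncomputable def edgeCondMean (f : ℝ → ℝ) (i j : Fin n) (a b : Fin r) : ℝ :=
  (∫ ω in {ω | sbm.Z i ω = a ∧ sbm.Z j ω = b}, f (sbm.X i j ω) ∂μ)
    / μ.real {ω | sbm.Z i ω = a ∧ sbm.Z j ω = b}

theorem integral_cond_labels_eq_edgeCondMean {i j : Fin n} (hij : i ≠ j) (z : Fin n → Fin r)
    {f : ℝ → ℝ} (hf : Measurable f) (hfi : Integrable (fun ω => f (sbm.X i j ω)) μ) :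
    ∫ ω, f (sbm.X i j ω) ∂μ[|sbm.labels ⁻¹' {z}] = sbm.edgeCondMean f i j (z i) (z j) := by
  have := sbm.prob
  have hB : {ω | sbm.Z i ω = z i ∧ sbm.Z j ω = z j}
      = sbm.labels ⁻¹'
        ↑(Finset.univ.filter fun z' : Fin n → Fin r => z' i = z i ∧ z' j = z j) := by
    ext ω
    simp [labels]
  have hmix : ∫ ω in {ω | sbm.Z i ω = z i ∧ sbm.Z j ω = z j}, f (sbm.X i j ω) ∂μ
      = μ.real {ω | sbm.Z i ω = z i ∧ sbm.Z j ω = z j}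
        * ∫ ω, f (sbm.X i j ω) ∂μ[|sbm.labels ⁻¹' {z}] := by
    rw [hB]
    refine setIntegral_preimage_finset_eq_mul sbm.measurable_labels _ hfi _ fun z' hz' => ?_
    obtain ⟨hi, hj⟩ := (Finset.mem_filter.1 hz').2
    rw [setIntegral_eq_measureReal_mul_integral_cond, sbm.integral_cond_labels_congr hij hi hj hf]
  rw [edgeCondMean, hmix, mul_div_cancel_left₀ _
    ((sbm.measureReal_Z_eq_and_Z_eq hij _ _).trans_ne
      (mul_pos (sbm.p_pos _) (sbm.p_pos _)).ne')]

theorem setIntegral_Z_eq_div_eq_sum {i j : Fin n} (hij : i ≠ j) {f : ℝ → ℝ}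
    (hfi : Integrable (fun ω => f (sbm.X i j ω)) μ) (a : Fin r) :
    (∫ ω in {ω | sbm.Z i ω = a}, f (sbm.X i j ω) ∂μ) / μ.real {ω | sbm.Z i ω = a}
      = ∑ b, sbm.p b * sbm.edgeCondMean f i j a b := by
  have := sbm.prob
  set Y : Ω → Fin r × Fin r := fun ω => (sbm.Z i ω, sbm.Z j ω)
  have hY : Measurable Y := (sbm.Z_meas i).prodMk (sbm.Z_meas j)
  have hS : {ω | sbm.Z i ω = a} = Y ⁻¹' ↑({a} ×ˢ Finset.univ : Finset (Fin r × Fin r)) := by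
    ext ω
    simp [Y, eq_comm]
  have hfiber : ∀ b, ∫ ω in Y ⁻¹' {(a, b)}, f (sbm.X i j ω) ∂μ
      = sbm.p a * (sbm.p b * sbm.edgeCondMean f i j a b) := by
    intro b
    have hB : Y ⁻¹' {(a, b)} = {ω | sbm.Z i ω = a ∧ sbm.Z j ω = b} := by
      ext ω
      simp [Y]
    have hpa := (sbm.p_pos a).ne'
    have hpb := (sbm.p_pos b).ne'
    rw [hB, edgeCondMean, sbm.measureReal_Z_eq_and_Z_eq hij]
    field_simp
  rw [hS, setIntegral_preimage_finset_eq_sum hY _ hfi, Finset.sum_product, Finset.sum_singleton,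
    Finset.sum_congr rfl fun b _ => hfiber b, ← Finset.mul_sum, ← hS, sbm.measureReal_Z_eq,
    mul_div_cancel_left₀ _ (sbm.p_pos a).ne']

section Path

variable {i₁ i₂ i₃ i₄ : Fin n} (h12 : i₁ ≠ i₂) (h13 : i₁ ≠ i₃) (h14 : i₁ ≠ i₄)
  (h23 : i₂ ≠ i₃) (h24 : i₂ ≠ i₄) (h34 : i₃ ≠ i₄)
  {f g h : ℝ → ℝ} (hf : Measurable f) (hg : Measurable g) (hh : Measurable h)
  (hfi : Integrable (fun ω => f (sbm.X i₁ i₂ ω)) μ)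
  (hgi : Integrable (fun ω => g (sbm.X i₁ i₃ ω)) μ)
  (hhi : Integrable (fun ω => h (sbm.X i₃ i₄ ω)) μ)

include h12 h13 h14 h23 h34 hf hg hh hfi hgi hhi in
theorem setIntegral_labels_path (z : Fin n → Fin r) :
    ∫ ω in sbm.labels ⁻¹' {z}, f (sbm.X i₁ i₂ ω) * g (sbm.X i₁ i₃ ω) * h (sbm.X i₃ i₄ ω) ∂μ
      = μ.real (sbm.labels ⁻¹' {z}) * (sbm.edgeCondMean f i₁ i₂ (z i₁) (z i₂)
        * sbm.edgeCondMean g i₁ i₃ (z i₁) (z i₃) * sbm.edgeCondMean h i₃ i₄ (z i₃) (z i₄)) := by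
  have := sbm.prob
  rw [setIntegral_eq_measureReal_mul_integral_cond, ← sbm.edgeWeight_ofNe h12,
    ← sbm.edgeWeight_ofNe h13, ← sbm.edgeWeight_ofNe h34,
    (sbm.iIndepFun_edgeWeight_cond_labels z).integral_comp_mul_comp_mul_comp
      sbm.measurable_edgeWeight (by rw [Ne, Edge.ofNe_eq_ofNe_iff]; omega)
      (by rw [Ne, Edge.ofNe_eq_ofNe_iff]; omega) (by rw [Ne, Edge.ofNe_eq_ofNe_iff]; omega)
      hf hg hh,
    sbm.edgeWeight_ofNe, sbm.edgeWeight_ofNe, sbm.edgeWeight_ofNe,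
    sbm.integral_cond_labels_eq_edgeCondMean h12 z hf hfi,
    sbm.integral_cond_labels_eq_edgeCondMean h13 z hg hgi,
    sbm.integral_cond_labels_eq_edgeCondMean h34 z hh hhi]

include h12 h13 h14 h23 h24 h34 in
theorem measureReal_labels_four_eq (q : Fin r × Fin r × Fin r × Fin r) :
    μ.real {ω | (sbm.Z i₁ ω, sbm.Z i₂ ω, sbm.Z i₃ ω, sbm.Z i₄ ω) = q}
      = sbm.p q.1 * sbm.p q.2.1 * sbm.p q.2.2.1 * sbm.p q.2.2.2 := by
  obtain ⟨a, b, c, d⟩ := q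
  have h := sbm.measure_forall_mem_Z_eq {i₁, i₂, i₃, i₄}
    fun k => if k = i₁ then a else if k = i₂ then b else if k = i₃ then c else d
  simp only [Finset.mem_insert, Finset.mem_singleton, forall_eq_or_imp, forall_eq, if_pos,
    if_neg h12.symm, if_neg h13.symm, if_neg h14.symm, if_neg h23.symm, if_neg h24.symm,
    if_neg h34.symm] at h
  rw [Finset.prod_insert (by simp [h12, h13, h14]), Finset.prod_insert (by simp [h23, h24]),
    Finset.prod_pair h34] at h
  simp only [if_pos, if_neg h12.symm, if_neg h13.symm, if_neg h14.symm, if_neg h23.symm,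
    if_neg h24.symm, if_neg h34.symm] at h
  simp only [Prod.mk.injEq]
  have hp : ∀ x, 0 ≤ sbm.p x := fun x => (sbm.p_pos x).le
  rw [measureReal_def, h, ENNReal.toReal_ofReal
    (mul_nonneg (hp a) (mul_nonneg (hp b) (mul_nonneg (hp c) (hp d))))]
  ring

include h12 h13 h14 h23 h24 h34 hf hg hh hfi hgi hhi in
theorem integral_path_eq_sum
    (hF : Integrable (fun ω => f (sbm.X i₁ i₂ ω) * g (sbm.X i₁ i₃ ω) * h (sbm.X i₃ i₄ ω)) μ) :
    ∫ ω, f (sbm.X i₁ i₂ ω) * g (sbm.X i₁ i₃ ω) * h (sbm.X i₃ i₄ ω) ∂μ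
      = ∑ a, ∑ b, ∑ c, ∑ d, sbm.p a * sbm.p b * sbm.p c * sbm.p d
          * (sbm.edgeCondMean f i₁ i₂ a b * sbm.edgeCondMean g i₁ i₃ a c
            * sbm.edgeCondMean h i₃ i₄ c d) := by
  have := sbm.prob
  set Y : Ω → Fin r × Fin r × Fin r × Fin r :=
    fun ω => (sbm.Z i₁ ω, sbm.Z i₂ ω, sbm.Z i₃ ω, sbm.Z i₄ ω)
  have hY : Measurable Y := (sbm.Z_meas i₁).prodMk
    ((sbm.Z_meas i₂).prodMk ((sbm.Z_meas i₃).prodMk (sbm.Z_meas i₄)))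
  have hfiber : ∀ q,
      ∫ ω in Y ⁻¹' {q}, f (sbm.X i₁ i₂ ω) * g (sbm.X i₁ i₃ ω) * h (sbm.X i₃ i₄ ω) ∂μ
      = sbm.p q.1 * sbm.p q.2.1 * sbm.p q.2.2.1 * sbm.p q.2.2.2
        * (sbm.edgeCondMean f i₁ i₂ q.1 q.2.1 * sbm.edgeCondMean g i₁ i₃ q.1 q.2.2.1
          * sbm.edgeCondMean h i₃ i₄ q.2.2.1 q.2.2.2) := by
    intro q
    have hC : Y ⁻¹' {q} = sbm.labels ⁻¹'
        ↑(Finset.univ.filter fun z : Fin n → Fin r => (z i₁, z i₂, z i₃, z i₄) = q) := by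
      ext ω
      simp [Y, labels]
    rw [hC, setIntegral_preimage_finset_eq_mul sbm.measurable_labels _ hF _ fun z hz => ?_, ← hC]
    · exact congrArg (· * _) (sbm.measureReal_labels_four_eq h12 h13 h14 h23 h24 h34 q)
    · obtain rfl := (Finset.mem_filter.1 hz).2
      exact sbm.setIntegral_labels_path h12 h13 h14 h23 h34 hf hg hh hfi hgi hhi z
  rw [← setIntegral_univ, ← preimage_univ (f := Y), ← Finset.coe_univ,
    setIntegral_preimage_finset_eq_sum hY _ hF, Finset.sum_congr rfl fun q _ => hfiber q]
  simp only [Fintype.sum_prod_type]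

end Path

end SBM

theorem path_graph_moment_factorization_general
    {Ω : Type} [MeasurableSpace Ω] {ℙ : Measure Ω} {n r l : ℕ}
    (sbm : SBM Ω ℙ n r)
    (α : Fin l → ℝ → ℝ)
    (hα_meas : ∀ l', Measurable (α l'))
    (hα_bdd : ∀ l', ∃ C, ∀ u, |α l' u| ≤ C)
    (φ : ℝ → ℝ) (hφ_meas : Measurable φ)
    (hφ_int : ∀ i j, i ≠ j → Integrable (fun ω => φ (sbm.X i j ω)) ℙ)
    (G : Matrix (Fin l) (Fin r) ℝ)
    (hG : ∀ i j, i ≠ j → ∀ l' z,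
      G l' z = (∫ ω in {ω | sbm.Z i ω = z}, α l' (sbm.X i j ω) ∂ℙ)
                  / (ℙ {ω | sbm.Z i ω = z}).toReal)
    (Hφ : Matrix (Fin r) (Fin r) ℝ)
    (hHφ : ∀ i j, i ≠ j → ∀ z₁ z₂,
      Hφ z₁ z₂ = sbm.p z₁ * sbm.p z₂ *
        ((∫ ω in {ω | sbm.Z i ω = z₁ ∧ sbm.Z j ω = z₂}, φ (sbm.X i j ω) ∂ℙ)
          / (ℙ {ω | sbm.Z i ω = z₁ ∧ sbm.Z j ω = z₂}).toReal))
    (i₁ i₂ i₃ i₄ : Fin n)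
    (h12 : i₁ ≠ i₂) (h13 : i₁ ≠ i₃) (h14 : i₁ ≠ i₄)
    (h23 : i₂ ≠ i₃) (h24 : i₂ ≠ i₄) (h34 : i₃ ≠ i₄)
    (l₁ l₂ : Fin l) :
    ∫ ω, α l₁ (sbm.X i₁ i₂ ω) * φ (sbm.X i₁ i₃ ω) * α l₂ (sbm.X i₃ i₄ ω) ∂ℙ
      = (G * Hφ * G.transpose) l₁ l₂ := by
  have := sbm.prob
  have hαint : ∀ l' i j, Integrable (fun ω => α l' (sbm.X i j ω)) ℙ := fun l' i j =>
    (hα_bdd l').elim fun C hC => Integrable.of_bound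
      ((hα_meas l').comp (sbm.X_meas i j)).aestronglyMeasurable C (ae_of_all _ fun ω => hC _)
  have hint : Integrable
      (fun ω => α l₁ (sbm.X i₁ i₂ ω) * φ (sbm.X i₁ i₃ ω) * α l₂ (sbm.X i₃ i₄ ω)) ℙ := by
    obtain ⟨C₁, hC₁⟩ := hα_bdd l₁
    obtain ⟨C₂, hC₂⟩ := hα_bdd l₂
    exact ((hφ_int i₁ i₃ h13).bdd_mul (hαint l₁ i₁ i₂).aestronglyMeasurable
      (ae_of_all _ fun ω => hC₁ _)).mul_bdd (hαint l₂ i₃ i₄).aestronglyMeasurable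
      (ae_of_all _ fun ω => hC₂ _)
  have hG₁ : ∀ a, G l₁ a = ∑ b, sbm.p b * sbm.edgeCondMean (α l₁) i₁ i₂ a b := fun a => by
    rw [hG i₁ i₂ h12, ← measureReal_def, sbm.setIntegral_Z_eq_div_eq_sum h12 (hαint l₁ i₁ i₂)]
  have hG₂ : ∀ c, G l₂ c = ∑ d, sbm.p d * sbm.edgeCondMean (α l₂) i₃ i₄ c d := fun c => by
    rw [hG i₃ i₄ h34, ← measureReal_def, sbm.setIntegral_Z_eq_div_eq_sum h34 (hαint l₂ i₃ i₄)]
  have hH : ∀ a c, Hφ a c = sbm.p a * sbm.p c * sbm.edgeCondMean φ i₁ i₃ a c :=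
    hHφ i₁ i₃ h13
  rw [sbm.integral_path_eq_sum h12 h13 h14 h23 h24 h34 (hα_meas l₁) hφ_meas (hα_meas l₂)
    (hαint l₁ i₁ i₂) (hφ_int i₁ i₃ h13) (hαint l₂ i₃ i₄) hint, sum_path_eq_sum_sum_mul,
    Matrix.mul_mul_transpose_apply]
  simp only [hG₁, hG₂, hH]

/-- Under the weighted stochastic block model, the path-graph moment
matrix factors multilinearly: for distinct nodes `i₁, i₂, i₃, i₄` and all `l₁ l₂`,
`E(α_{l₁}(X_{i₁,i₂}) φ(X_{i₁,i₃}) α_{l₂}(X_{i₃,i₄})) = (G * H_φ * Gᵀ) l₁ l₂`,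
where `(G) l' z = E(α_{l'}(X_{i,j}) | Z i = z)` and
`(H_φ) z₁ z₂ = p z₁ * p z₂ * E(φ(X_{i,j}) | Z i = z₁, Z j = z₂)`
(conditional expectations given an event are written as restricted integrals divided by
the probability of the event). -/
theorem path_graph_moment_factorization
    {Ω : Type} [MeasurableSpace Ω] {ℙ : Measure Ω} {n r l : ℕ}
    (sbm : SBM Ω ℙ n r) (hn : 4 ≤ n)
    (α : Fin l → ℝ → ℝ)
    (hα_meas : ∀ l', Measurable (α l'))
    (hα_bdd : ∀ l', ∃ C, ∀ u, |α l' u| ≤ C)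
    (φ : ℝ → ℝ) (hφ_meas : Measurable φ)
    (hφ_int : ∀ i j, i ≠ j → Integrable (fun ω => φ (sbm.X i j ω)) ℙ)
    (G : Matrix (Fin l) (Fin r) ℝ)
    (hG : ∀ i j, i ≠ j → ∀ l' z,
      G l' z = (∫ ω in {ω | sbm.Z i ω = z}, α l' (sbm.X i j ω) ∂ℙ)
                  / (ℙ {ω | sbm.Z i ω = z}).toReal)
    (Hφ : Matrix (Fin r) (Fin r) ℝ)
    (hHφ : ∀ i j, i ≠ j → ∀ z₁ z₂,
      Hφ z₁ z₂ = sbm.p z₁ * sbm.p z₂ *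
        ((∫ ω in {ω | sbm.Z i ω = z₁ ∧ sbm.Z j ω = z₂}, φ (sbm.X i j ω) ∂ℙ)
          / (ℙ {ω | sbm.Z i ω = z₁ ∧ sbm.Z j ω = z₂}).toReal))
    (i₁ i₂ i₃ i₄ : Fin n)
    (h12 : i₁ ≠ i₂) (h13 : i₁ ≠ i₃) (h14 : i₁ ≠ i₄)
    (h23 : i₂ ≠ i₃) (h24 : i₂ ≠ i₄) (h34 : i₃ ≠ i₄)
    (l₁ l₂ : Fin l) :
    ∫ ω, α l₁ (sbm.X i₁ i₂ ω) * φ (sbm.X i₁ i₃ ω) * α l₂ (sbm.X i₃ i₄ ω) ∂ℙ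
      = (G * Hφ * G.transpose) l₁ l₂ :=
  path_graph_moment_factorization_general sbm α hα_meas hα_bdd φ hφ_meas hφ_int G hG Hφ hHφ i₁ i₂ i₃
    i₄ h12 h13 h14 h23 h24 h34 l₁ l₂
end

section
/- (Theorem 1(i), concrete form.) Let F_1,…,F_{r_1} : ℝ → ℝ be linearly independent functions and p_1,…,p_{r_1} > 0, and let G_1,…,G_{r_2} : ℝ → ℝ be linearly independent functions and q_1,…,q_{r_2} > 0. If Σ_{z=1}^{r_1} p_z F_z(x) F_z(y) = Σ_{z=1}^{r_2} q_z G_z(x) G_z(y) for all x, y ∈ ℝ, then r_1 = r_2. In particular, under the stochastic block model with linearly independent component functions F_1,…,F_r, the number of communities r is determined by the joint distribution of the edge weights of a two-star subgraph. -/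
lemma span_mix_eq {r : ℕ} (F : Fin r → ℝ → ℝ) (p : Fin r → ℝ)
    (hF : LinearIndependent ℝ F) (hp : ∀ z, 0 < p z) :
    Submodule.span ℝ (Set.range (fun x : ℝ => fun y => ∑ z, p z * F z x * F z y))
      = Submodule.span ℝ (Set.range F) := by
  set K : ℝ → ℝ → ℝ := fun x => fun y => ∑ z, p z * F z x * F z y with hK
  have hKmem : ∀ x, K x ∈ Submodule.span ℝ (Set.range F) := by
    intro x
    have : K x = ∑ z, (p z * F z x) • F z := by
      funext y
      simp [hK, Finset.sum_apply, mul_assoc]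
    rw [this]
    exact Submodule.sum_mem _ fun z _ =>
      Submodule.smul_mem _ _ (Submodule.subset_span ⟨z, rfl⟩)
  apply le_antisymm
  · rw [Submodule.span_le]
    rintro _ ⟨x, rfl⟩
    exact hKmem x
  · rw [Submodule.span_le]
    rintro _ ⟨w, rfl⟩
    by_contra hw
    obtain ⟨φ, hφw, hφK⟩ := Submodule.exists_dual_map_eq_bot_of_notMem hw inferInstance
    have hφ0 : ∀ x, φ (K x) = 0 := by
      intro x
      have : φ (K x) ∈ Submodule.map φ (Submodule.span ℝ (Set.range K)) :=
        ⟨K x, Submodule.subset_span ⟨x, rfl⟩, rfl⟩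
      rw [hφK] at this
      simpa using this
    have hzero : ∀ z, p z * φ (F z) = 0 := by
      have hli := Fintype.linearIndependent_iff.mp hF (fun z => p z * φ (F z))
      apply hli
      funext x
      have h1 : K x = ∑ z, (p z * F z x) • F z := by
        funext y
        simp [hK, Finset.sum_apply, mul_assoc]
      have h2 : φ (K x) = ∑ z, (p z * F z x) * φ (F z) := by
        rw [h1, map_sum]
        simp [map_smul]
      have := hφ0 x
      rw [h2] at this
      have h3 : ∑ z, (p z * φ (F z)) • F z ∈ (Set.range fun f : ℝ → ℝ => f) := ⟨_, rfl⟩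
      show (∑ z, (p z * φ (F z)) • F z) x = (0 : ℝ → ℝ) x
      rw [Finset.sum_apply]
      simp only [Pi.smul_apply, smul_eq_mul, Pi.zero_apply]
      rw [← this]
      apply Finset.sum_congr rfl
      intro z _
      ring
    exact hφw (by
      have := hzero w
      have hpw := (hp w).ne'
      exact (mul_eq_zero.mp this).resolve_left hpw)

/-- Theorem 1(i), concrete form. If two finite mixtures of product form
with linearly independent component functions and strictly positive weights give the same
bivariate function, i.e.
`∑ z, p z * F z x * F z y = ∑ z, q z * G z x * G z y` for all `x y : ℝ`,
then the two mixtures have the same number of components: `r₁ = r₂`. In particular, under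
the stochastic block model the number of communities is determined by the joint
distribution of the edge weights of a two-star subgraph. -/
theorem two_star_identifies_number_of_communities {r₁ r₂ : ℕ}
    (F : Fin r₁ → ℝ → ℝ) (G : Fin r₂ → ℝ → ℝ)
    (p : Fin r₁ → ℝ) (q : Fin r₂ → ℝ)
    (hF : LinearIndependent ℝ F) (hG : LinearIndependent ℝ G)
    (hp : ∀ z, 0 < p z) (hq : ∀ z, 0 < q z)
    (hmix : ∀ x y : ℝ, ∑ z, p z * F z x * F z y = ∑ z, q z * G z x * G z y) :
    r₁ = r₂ := by
  have h1 := span_mix_eq F p hF hp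
  have h2 := span_mix_eq G q hG hq
  have hKeq : (fun x : ℝ => fun y => ∑ z, p z * F z x * F z y)
      = (fun x : ℝ => fun y => ∑ z, q z * G z x * G z y) := by
    funext x y; exact hmix x y
  rw [hKeq, h2] at h1
  have := finrank_span_eq_card hF
  rw [← h1, finrank_span_eq_card hG] at this
  simpa using this.symm
end

section
/- (Trivariate mixture uniqueness used in Theorem 1(ii).) Let F_1,…,F_r and G_1,…,G_r be cumulative distribution functions of Borel probability measures on ℝ, with each family linearly independent, and let p_1,…,p_r > 0 and q_1,…,q_r > 0 satisfy Σ_z p_z = Σ_z q_z = 1. If Σ_{z=1}^r p_z F_z(x_1) F_z(x_2) F_z(x_3) = Σ_{z=1}^r q_z G_z(x_1) G_z(x_2) G_z(x_3) for all x_1, x_2, x_3 ∈ ℝ, then there exists a permutation σ of {1,…,r} such that q_{σ(z)} = p_z and G_{σ(z)} = F_z (pointwise) for every z. -/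
/-- `F` is the cumulative distribution function of a Borel probability measure on `ℝ`:
nondecreasing, right-continuous, with limit `0` at `-∞` and limit `1` at `+∞`. -/
def IsCDF (F : ℝ → ℝ) : Prop :=
  Monotone F ∧ (∀ x, ContinuousWithinAt F (Set.Ici x) x) ∧
    Filter.Tendsto F Filter.atBot (nhds 0) ∧ Filter.Tendsto F Filter.atTop (nhds 1)

/-!
Freezing two variables of the mixture identity and reducing modulo the span of the `F i`, linear
independence of the `G j` puts every `G j` in that span, and symmetrically. With
`G j = ∑ i, A j i • F i` and `F i = ∑ j, B i j • G j`, comparing coefficients of `F i` in the first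
variable and then of `G j` in the second gives `(p i * B i j) • F i = (q j * A j i) • G j`, so each
`F i` is a multiple of some `G j`. The limits at `+∞` force the multiple to be `1`, linear
independence makes `i ↦ j` a permutation, and the identity marginalised twice matches the weights.
-/

open Filter Finset Topology

section Mixtures

variable {ι κ : Type*} [Fintype ι] [Fintype κ]

section LinearAlgebra

variable {K X : Type*} [Field K]

def tripleMixture (p : ι → K) (F : ι → X → K) (x y t : X) : K :=
  ∑ i, p i * F i x * F i y * F i t

theorem LinearIndependent.eq_zero_of_forall_sum_smul_eq_zero {V : Type*} [AddCommGroup V]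
    [Module K V] {G : ι → X → K} (hG : LinearIndependent K G) {v : ι → V}
    (h : ∀ x, ∑ i, G i x • v i = 0) (i : ι) : v i = 0 := by
  refine (Module.forall_dual_apply_eq_zero_iff K (v i)).1 fun φ => ?_
  refine Fintype.linearIndependent_iff.1 hG (fun j => φ (v j)) ?_ i
  funext x
  simpa [Finset.sum_apply, mul_comm] using congrArg φ (h x)

theorem LinearIndependent.eq_of_forall_sum_mul_eq {G : ι → X → K} (hG : LinearIndependent K G)
    {c d : ι → K} (h : ∀ x, ∑ i, c i * G i x = ∑ i, d i * G i x) (i : ι) : c i = d i :=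
  sub_eq_zero.1 <| hG.eq_zero_of_forall_sum_smul_eq_zero (v := c - d) (fun x => by
    simpa [mul_sub, sub_eq_zero, mul_comm] using h x) i

variable {F : ι → X → K} {G : κ → X → K} {p : ι → K} {q : κ → K}

theorem mem_span_range_of_tripleMixture_eq (hG : LinearIndependent K G) (hq : ∀ j, q j ≠ 0)
    (h : tripleMixture p F = tripleMixture q G) (j : κ) :
    G j ∈ Submodule.span K (Set.range F) := by
  set W := Submodule.span K (Set.range F)
  have hW : ∀ x y, ∑ j, G j x • G j y • q j • W.mkQ (G j) = 0 := by
    intro x y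
    have hsum : ∑ j, (q j * G j x * G j y) • G j = ∑ i, (p i * F i x * F i y) • F i := by
      funext t
      simpa [Finset.sum_apply, tripleMixture] using (congrFun (congrFun (congrFun h x) y) t).symm
    have hmem : ∑ i, (p i * F i x * F i y) • F i ∈ W :=
      W.sum_smul_mem _ fun i _ => Submodule.subset_span ⟨i, rfl⟩
    rw [← (Submodule.Quotient.mk_eq_zero W).2 hmem, ← hsum, ← W.mkQ_apply, map_sum]
    simp only [map_smul, smul_smul]
    exact Finset.sum_congr rfl fun j _ => by ring_nf
  obtain ⟨y, hy⟩ := Function.ne_iff.1 (hG.ne_zero j)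
  have := hG.eq_zero_of_forall_sum_smul_eq_zero (fun x => hW x y) j
  rw [smul_eq_zero, smul_eq_zero] at this
  simpa [hq j, W] using this.resolve_left hy

theorem mul_mul_eq_sum_of_tripleMixture_eq (hF : LinearIndependent K F) {A : κ → ι → K}
    (hA : ∀ j, ∑ i, A j i • F i = G j) (h : tripleMixture p F = tripleMixture q G)
    (i : ι) (x y : X) : p i * F i x * F i y = ∑ j, q j * A j i * G j x * G j y := by
  have hAt : ∀ j t, G j t = ∑ i, A j i * F i t := fun j t => by
    simp [← hA j, Finset.sum_apply]
  rw [← sub_eq_zero]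
  refine congrFun (congrFun (hF.eq_zero_of_forall_sum_smul_eq_zero
    (v := fun i x y => p i * F i x * F i y - ∑ j, q j * A j i * G j x * G j y) (fun t => ?_) i) x) y
  funext x y
  have := congrFun (congrFun (congrFun h t) x) y
  simp only [tripleMixture, hAt _ t, Finset.sum_mul, Finset.mul_sum] at this
  rw [Finset.sum_comm] at this
  simp only [Finset.sum_apply, Pi.smul_apply, smul_eq_mul, Pi.zero_apply, mul_sub,
    Finset.mul_sum, Finset.sum_sub_distrib, sub_eq_zero]
  refine (Finset.sum_congr rfl fun i _ => by ring).trans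
    (this.trans (Finset.sum_congr rfl fun i _ => Finset.sum_congr rfl fun j _ => by ring))

theorem smul_eq_smul_of_mul_mul_eq_sum (hG : LinearIndependent K G) {f : X → K} {a : K}
    {b c : κ → K} (hf : ∑ j, b j • G j = f)
    (h : ∀ x y, a * f x * f y = ∑ j, c j * G j x * G j y) (j : κ) :
    (a * b j) • f = c j • G j := by
  rw [← sub_eq_zero]
  refine hG.eq_zero_of_forall_sum_smul_eq_zero (v := fun j => (a * b j) • f - c j • G j)
    (fun x => ?_) j
  funext y
  have hfx : f x = ∑ j, b j * G j x := by simp [← hf, Finset.sum_apply]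
  have := h x y
  rw [hfx] at this
  simp only [Finset.sum_apply, Pi.smul_apply, smul_eq_mul, Pi.sub_apply, Pi.zero_apply, mul_sub,
    Finset.sum_sub_distrib, sub_eq_zero, Finset.mul_sum, Finset.sum_mul] at this ⊢
  convert this using 2 <;> ring

theorem exists_eq_smul_of_tripleMixture_eq (hF : LinearIndependent K F)
    (hG : LinearIndependent K G) (hp : ∀ i, p i ≠ 0) (hq : ∀ j, q j ≠ 0)
    (h : tripleMixture p F = tripleMixture q G) (i : ι) : ∃ j, ∃ c : K, F i = c • G j := by
  choose A hA using fun j =>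
    (Submodule.mem_span_range_iff_exists_fun K).1 (mem_span_range_of_tripleMixture_eq hG hq h j)
  choose B hB using fun i =>
    (Submodule.mem_span_range_iff_exists_fun K).1 (mem_span_range_of_tripleMixture_eq hF hp h.symm i)
  have hrank := smul_eq_smul_of_mul_mul_eq_sum hG (hB i)
    (mul_mul_eq_sum_of_tripleMixture_eq hF hA h i)
  obtain ⟨j, hj⟩ : ∃ j, B i j ≠ 0 := by
    by_contra! hB0
    exact hF.ne_zero i (by simp [← hB i, hB0])
  refine ⟨j, (p i * B i j)⁻¹ * (q j * A j i), ?_⟩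
  rw [mul_smul, ← hrank j, smul_smul, inv_mul_cancel₀ (mul_ne_zero (hp i) hj), one_smul]

end LinearAlgebra

theorem sum_eq_sum_of_forall_sum_mul_eq {α : Type*} {l : Filter α} [l.NeBot]
    {F : ι → α → ℝ} {G : κ → α → ℝ} (hF : ∀ i, Tendsto (F i) l (𝓝 1))
    (hG : ∀ j, Tendsto (G j) l (𝓝 1)) {c : ι → ℝ} {d : κ → ℝ}
    (h : ∀ x, ∑ i, c i * F i x = ∑ j, d j * G j x) : ∑ i, c i = ∑ j, d j := by
  have hc := tendsto_finsetSum univ fun i _ => (hF i).const_mul (c i)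
  have hd := tendsto_finsetSum univ fun j _ => (hG j).const_mul (d j)
  simp only [mul_one] at hc hd
  exact tendsto_nhds_unique hc (by simpa only [h] using hd)

end Mixtures

theorem trivariate_mixture_uniqueness_general {r : ℕ}
    (F G : Fin r → ℝ → ℝ)
    (hFcdf : ∀ z, IsCDF (F z)) (hGcdf : ∀ z, IsCDF (G z))
    (hF : LinearIndependent ℝ F) (hG : LinearIndependent ℝ G)
    (p q : Fin r → ℝ)
    (hp : ∀ z, 0 < p z) (hq : ∀ z, 0 < q z)
    (hmix : ∀ x₁ x₂ x₃ : ℝ,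
      ∑ z, p z * F z x₁ * F z x₂ * F z x₃ = ∑ z, q z * G z x₁ * G z x₂ * G z x₃) :
    ∃ σ : Equiv.Perm (Fin r), ∀ z, q (σ z) = p z ∧ G (σ z) = F z := by
  have hF1 : ∀ z, Tendsto (F z) atTop (𝓝 1) := fun z => (hFcdf z).2.2.2
  have hG1 : ∀ z, Tendsto (G z) atTop (𝓝 1) := fun z => (hGcdf z).2.2.2
  have htriple : tripleMixture p F = tripleMixture q G := by
    funext x₁ x₂ x₃
    exact hmix x₁ x₂ x₃
  have hGF : ∀ w, ∃ z, G z = F w := fun w => by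
    obtain ⟨z, c, hc⟩ := exists_eq_smul_of_tripleMixture_eq hF hG (fun w => (hp w).ne')
      (fun z => (hq z).ne') htriple w
    have hcG : Tendsto (F w) atTop (𝓝 (c * 1)) := hc ▸ (hG1 z).const_mul c
    rw [mul_one] at hcG
    exact ⟨z, by rw [hc, tendsto_nhds_unique hcG (hF1 w), one_smul]⟩
  choose σ hσ using hGF
  have hσinj : Function.Injective σ := fun w w' h => hF.injective (by rw [← hσ, ← hσ, h])
  let e := Equiv.ofBijective σ (Finite.injective_iff_bijective.1 hσinj)
  have hmarg : ∀ x, ∑ w, p w * F w x = ∑ z, q z * G z x := fun x =>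
    sum_eq_sum_of_forall_sum_mul_eq hF1 hG1 fun y =>
      sum_eq_sum_of_forall_sum_mul_eq hF1 hG1 (hmix x y)
  have hweights : ∀ x, ∑ w, p w * F w x = ∑ w, q (σ w) * F w x := fun x => by
    rw [hmarg x, ← e.sum_comp]
    simp [e, hσ]
  exact ⟨e, fun w => ⟨(hF.eq_of_forall_sum_mul_eq hweights w).symm, hσ w⟩⟩

/-- trivariate mixture uniqueness used in Theorem 1(ii). Two trivariate
finite mixtures of triple products of CDFs, each with linearly independent components and
strictly positive weights summing to one, that agree everywhere must coincide up to a
permutation of the components. -/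
theorem trivariate_mixture_uniqueness {r : ℕ}
    (F G : Fin r → ℝ → ℝ)
    (hFcdf : ∀ z, IsCDF (F z)) (hGcdf : ∀ z, IsCDF (G z))
    (hF : LinearIndependent ℝ F) (hG : LinearIndependent ℝ G)
    (p q : Fin r → ℝ)
    (hp : ∀ z, 0 < p z) (hq : ∀ z, 0 < q z)
    (hps : ∑ z, p z = 1) (hqs : ∑ z, q z = 1)
    (hmix : ∀ x₁ x₂ x₃ : ℝ,
      ∑ z, p z * F z x₁ * F z x₂ * F z x₃ = ∑ z, q z * G z x₁ * G z x₂ * G z x₃) :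
    ∃ σ : Equiv.Perm (Fin r), ∀ z, q (σ z) = p z ∧ G (σ z) = F z :=
  trivariate_mixture_uniqueness_general F G hFcdf hGcdf hF hG p q hp hq hmix
end

section
/- (Simultaneous orthogonal diagonalizability of the whitened matrices.) Let G be an l×r real matrix with rank r, let p ∈ ℝ^r have all entries strictly positive, and set A_0 := G diag(p) Gᵀ and, for each l' ∈ {1,…,l}, A_{l'} := G D_{l'} diag(p) Gᵀ, where D_{l'} is the r×r diagonal matrix with diagonal entries (G)_{l',1},…,(G)_{l',r}. If V is any r×l real matrix satisfying V A_0 Vᵀ = I_r, then the r×r matrix Q := V G diag(p)^{1/2} is orthogonal and, for every l', V A_{l'} Vᵀ = Q D_{l'} Qᵀ. In particular the matrices N_{l'} := V A_{l'} Vᵀ are all diagonalized in the same orthonormal basis, with the diagonal of D_{l'} equal to the l'-th row of G. -/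
/-- simultaneous orthogonal diagonalizability of the whitened matrices.
Let `G` be an `l × r` real matrix of rank `r`, `p` have strictly positive entries, and set
`A₀ = G * diag p * Gᵀ` and `A_{l'} = G * D_{l'} * diag p * Gᵀ`, with `D_{l'}` the diagonal
matrix whose diagonal is the `l'`-th row of `G`. If `V` is any `r × l` matrix with
`V * A₀ * Vᵀ = I`, then `Q := V * G * diag (√p)` is orthogonal and
`V * A_{l'} * Vᵀ = Q * D_{l'} * Qᵀ` for every `l'`; i.e. the whitened matrices
`N_{l'} = V * A_{l'} * Vᵀ` are all diagonalized in the same orthonormal basis, with the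
diagonal of `D_{l'}` equal to the `l'`-th row of `G`. -/
theorem simultaneous_orthogonal_diagonalization {l r : ℕ}
    (G : Matrix (Fin l) (Fin r) ℝ) (hG : G.rank = r)
    (p : Fin r → ℝ) (hp : ∀ z, 0 < p z)
    (V : Matrix (Fin r) (Fin l) ℝ)
    (hV : V * (G * Matrix.diagonal p * G.transpose) * V.transpose = 1) :
    (V * G * Matrix.diagonal fun z => Real.sqrt (p z)).transpose
        * (V * G * Matrix.diagonal fun z => Real.sqrt (p z)) = 1 ∧
    ∀ l' : Fin l,
      V * (G * Matrix.diagonal (fun z => G l' z) * Matrix.diagonal p * G.transpose)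
          * V.transpose
        = (V * G * Matrix.diagonal fun z => Real.sqrt (p z))
            * Matrix.diagonal (fun z => G l' z)
            * (V * G * Matrix.diagonal fun z => Real.sqrt (p z)).transpose := by
  set M := V * G with hM
  set d : Matrix (Fin r) (Fin r) ℝ := Matrix.diagonal fun z => Real.sqrt (p z) with hd
  have hdd : d * d = Matrix.diagonal p := by
    rw [hd, Matrix.diagonal_mul_diagonal]
    exact congrArg Matrix.diagonal (funext fun z => Real.mul_self_sqrt (hp z).le)
  have h1 : M * Matrix.diagonal p * M.transpose = 1 := by
    rw [hM, Matrix.transpose_mul]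
    calc V * G * Matrix.diagonal p * (G.transpose * V.transpose)
        = V * (G * Matrix.diagonal p * G.transpose) * V.transpose := by
          simp only [Matrix.mul_assoc]
      _ = 1 := hV
  have hQQt : (M * d) * (M * d).transpose = 1 := by
    calc (M * d) * (M * d).transpose = M * (d * d) * M.transpose := by
          simp only [Matrix.transpose_mul, hd, Matrix.diagonal_transpose, Matrix.mul_assoc]
      _ = 1 := by rw [hdd, h1]
  constructor
  · exact (mul_eq_one_comm).mp hQQt
  · intro l'
    have key : ∀ z, Real.sqrt (p z) * G l' z * Real.sqrt (p z) = G l' z * p z := fun z => by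
      rw [mul_comm (Real.sqrt (p z)) (G l' z), mul_assoc, Real.mul_self_sqrt (hp z).le]
    have hcomm : d * Matrix.diagonal (fun z => G l' z) * d
        = Matrix.diagonal (fun z => G l' z) * Matrix.diagonal p := by
      rw [hd, Matrix.diagonal_mul_diagonal, Matrix.diagonal_mul_diagonal,
        Matrix.diagonal_mul_diagonal]
      exact congrArg Matrix.diagonal (funext key)
    calc V * (G * Matrix.diagonal (fun z => G l' z) * Matrix.diagonal p * G.transpose)
          * V.transpose
        = M * (Matrix.diagonal (fun z => G l' z) * Matrix.diagonal p) * M.transpose := by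
          rw [hM, Matrix.transpose_mul]; simp only [Matrix.mul_assoc]
      _ = M * (d * Matrix.diagonal (fun z => G l' z) * d) * M.transpose := by rw [hcomm]
      _ = (M * d) * Matrix.diagonal (fun z => G l' z) * (M * d).transpose := by
          simp only [Matrix.transpose_mul, hd, Matrix.diagonal_transpose, Matrix.mul_assoc]
end

section
/- (Proposition 1, concrete form: nonparametric identification of the stochastic block model up to relabeling.) Let p, q ∈ ℝ^r have strictly positive entries summing to one, and let (F_{z_1,z_2}) and (G_{z_1,z_2}), for z_1, z_2 ∈ {1,…,r}, be symmetric families of cumulative distribution functions on ℝ (F_{z_1,z_2} = F_{z_2,z_1} and G_{z_1,z_2} = G_{z_2,z_1}). Define F_z := Σ_{z'=1}^r F_{z,z'} p_{z'} and G_z := Σ_{z'=1}^r G_{z,z'} q_{z'}, and assume F_1,…,F_r are linearly independent and G_1,…,G_r are linearly independent. If for all x_1, x_2, x_3 ∈ ℝ both (i) Σ_{z=1}^r p_z F_z(x_1) F_z(x_2) F_z(x_3) = Σ_{z=1}^r q_z G_z(x_1) G_z(x_2) G_z(x_3) (three-star subgraph) and (ii) Σ_{z_1,z_2} p_{z_1}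 p_{z_2} F_{z_1}(x_1) F_{z_1,z_2}(x_2) F_{z_2}(x_3) = Σ_{z_1,z_2} q_{z_1} q_{z_2} G_{z_1}(x_1) G_{z_1,z_2}(x_2) G_{z_2}(x_3) (path subgraph on four nodes), then there exists a permutation σ of {1,…,r} such that q_{σ(z)} = p_z for all z and G_{σ(z_1),σ(z_2)} = F_{z_1,z_2} (pointwise) for all z_1, z_2. -/
/-!
Since the mixtures `F_z` are linearly independent, contracting the three-star identity in two
of its variables writes each `F_z` as a combination `∑_w A_{zw} G_w`, and letting `x → ∞` shows
that the rows of `A` sum to one. Linear independence of the products `G_i ⊗ G_j ⊗ G_k` then turns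
the three-star identity into `∑_z p_z A_{zw₁} A_{zw₂} A_{zw₃} = q_{w₁} δ_{w₁w₂w₃}`. Summing out
`w₃` gives `Aᵀ diag(p) A = diag(q)`, so `A` is invertible, and then the third moments force
distinct columns of `A` to have disjoint supports: `A` is a permutation matrix `σ`, with
`q ∘ σ = p` and `F_z = G_{σ z}`. Read as a bilinear identity in the `F_z`, the path identity
finally identifies `F_{z₁z₂}` with `G_{σz₁,σz₂}`.
-/

open Finset Filter Topology Submodule

namespace LinearIndependent

variable {K X Y T ι κ μ : Type*} [Field K] [Fintype ι] [Fintype κ] [Fintype μ]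

theorem eq_of_forall_sum_mul_eq_s11 {f : ι → X → K} (hf : LinearIndependent K f) {c d : ι → K}
    (h : ∀ x, ∑ i, c i * f i x = ∑ i, d i * f i x) : c = d :=
  funext <| Fintype.linearIndependent_iffₛ.mp hf c d <| funext fun x => by simpa using h x

theorem eq_of_forall_sum_sum_mul_eq {f : ι → X → K} {g : κ → Y → K}
    (hf : LinearIndependent K f) (hg : LinearIndependent K g) {c d : ι → κ → K}
    (h : ∀ x y, ∑ i, ∑ j, c i j * f i x * g j y = ∑ i, ∑ j, d i j * f i x * g j y) :
    c = d := by
  have collect : ∀ (a : ι → κ → K) x y,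
      ∑ i, ∑ j, a i j * f i x * g j y = ∑ i, (∑ j, a i j * g j y) * f i x := fun a x y =>
    sum_congr rfl fun i _ => by rw [sum_mul]; exact sum_congr rfl fun j _ => by ring
  have hrow : ∀ y, (fun i => ∑ j, c i j * g j y) = fun i => ∑ j, d i j * g j y := fun y =>
    hf.eq_of_forall_sum_mul_eq_s11 fun x => by rw [← collect, ← collect, h]
  exact funext fun i => hg.eq_of_forall_sum_mul_eq_s11 fun y => congrFun (hrow y) i

theorem eq_of_forall_sum_sum_sum_mul_eq {f : ι → X → K} {g : κ → Y → K} {h : μ → T → K}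
    (hf : LinearIndependent K f) (hg : LinearIndependent K g) (hh : LinearIndependent K h)
    {c d : ι → κ → μ → K}
    (hcd : ∀ x y t, ∑ i, ∑ j, ∑ k, c i j k * f i x * g j y * h k t
      = ∑ i, ∑ j, ∑ k, d i j k * f i x * g j y * h k t) :
    c = d := by
  have collect : ∀ (a : ι → κ → μ → K) x y t, ∑ i, ∑ j, ∑ k, a i j k * f i x * g j y * h k t
      = ∑ i, ∑ j, (∑ k, a i j k * h k t) * f i x * g j y := fun a x y t =>
    sum_congr rfl fun i _ => sum_congr rfl fun j _ => by
      rw [sum_mul, sum_mul]; exact sum_congr rfl fun k _ => by ring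
  have hpair : ∀ t, (fun i j => ∑ k, c i j k * h k t) = fun i j => ∑ k, d i j k * h k t :=
    fun t => hf.eq_of_forall_sum_sum_mul_eq hg fun x y => by rw [← collect, ← collect, hcd]
  exact funext fun i => funext fun j =>
    hh.eq_of_forall_sum_mul_eq_s11 fun t => congrFun (congrFun (hpair t) i) j

theorem mul_fst_snd {f : ι → X → K} (hf : LinearIndependent K f) :
    LinearIndependent K fun i (xy : X × X) => f i xy.1 * f i xy.2 := by
  refine Fintype.linearIndependent_iff.mpr fun a ha i => ?_
  have hy : ∀ y, (fun i => a i * f i y) = 0 := fun y =>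
    hf.eq_of_forall_sum_mul_eq_s11 fun x => by
      simpa [mul_assoc, mul_comm (f _ x)] using congrFun ha (x, y)
  have : a i • f i = 0 := funext fun y => by simpa using congrFun (hy y) i
  exact (smul_eq_zero.mp this).resolve_right (hf.ne_zero i)

theorem mem_span_of_sum_cube_eq [DecidableEq ι] {f : ι → X → K} {g : κ → X → K}
    (hf : LinearIndependent K f) {c : ι → K} (hc : ∀ i, c i ≠ 0) (d : κ → K)
    (h : ∀ x y t, ∑ i, c i * (f i x * f i y * f i t) = ∑ j, d j * (g j x * g j y * g j t))
    (i : ι) : f i ∈ span K (Set.range g) := by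
  -- `Φ` sends every vector `(f i x * f i y)ᵢ` into the span of `g`, and these vectors span.
  let Φ := Fintype.linearCombination K fun i => c i • f i
  have hspan : span K (Set.range fun (xy : X × X) i => f i xy.1 * f i xy.2) = ⊤ :=
    span_flip_eq_top_iff_linearIndependent.mpr hf.mul_fst_snd
  have hle : span K (Set.range fun (xy : X × X) i => f i xy.1 * f i xy.2)
      ≤ (span K (Set.range g)).comap Φ := by
    refine span_le.mpr ?_
    rintro _ ⟨⟨x, y⟩, rfl⟩
    have hΦ : Φ (fun i => f i x * f i y) = ∑ j, (d j * g j x * g j y) • g j := funext fun t => by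
      simpa [Φ, Fintype.linearCombination_apply, mul_assoc, mul_comm, mul_left_comm] using h x y t
    change Φ _ ∈ span K (Set.range g)
    rw [hΦ]
    exact sum_mem fun j _ => smul_mem _ _ (subset_span ⟨j, rfl⟩)
  have : Φ (Pi.single i (c i)⁻¹) = f i := by simp [Φ, smul_smul, hc i]
  rw [← this]
  exact hle (hspan ▸ mem_top)

theorem sum_mul_mul_mul_eq_of_sum_cube_eq [DecidableEq κ] {g : κ → X → K}
    (hg : LinearIndependent K g) {A : Matrix ι κ K} {p : ι → K} {q : κ → K}
    (h : ∀ x y t, ∑ z, p z * ((∑ w, A z w * g w x) * (∑ w, A z w * g w y) * (∑ w, A z w * g w t))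
      = ∑ w, q w * (g w x * g w y * g w t)) (w₁ w₂ w₃ : κ) :
    ∑ z, p z * A z w₁ * A z w₂ * A z w₃ = if w₁ = w₂ ∧ w₁ = w₃ then q w₁ else 0 := by
  have hcd := hg.eq_of_forall_sum_sum_sum_mul_eq hg hg
    (c := fun i j k => ∑ z, p z * A z i * A z j * A z k)
    (d := fun i j k => if i = j ∧ i = k then q i else 0) fun x y t => by
      convert h x y t using 1
      · calc _ = ∑ z, ∑ i, ∑ j, ∑ k, p z * A z i * A z j * A z k * g i x * g j y * g k t := by
              simp only [sum_mul]
              simp_rw [sum_comm (s := (univ : Finset κ)) (t := (univ : Finset ι))]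
          _ = _ := sum_congr rfl fun z _ => by
              rw [sum_mul_sum, sum_mul, mul_sum]
              simp_rw [sum_mul, mul_sum]
              exact sum_congr rfl fun i _ => sum_congr rfl fun j _ => sum_congr rfl fun k _ => by
                ring
      · simp [ite_and, ite_mul, mul_assoc]
  exact congrFun (congrFun (congrFun hcd w₁) w₂) w₃

end LinearIndependent

namespace Matrix

variable {ι : Type*} [Fintype ι] [DecidableEq ι] {p q : ι → ℝ} {A : Matrix ι ι ℝ}

theorem sum_mul_mul_eq_of_third_moments (hrow : ∀ z, ∑ w, A z w = 1)
    (hT : ∀ w₁ w₂ w₃, ∑ z, p z * A z w₁ * A z w₂ * A z w₃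
      = if w₁ = w₂ ∧ w₁ = w₃ then q w₁ else 0) (w₁ w₂ : ι) :
    ∑ z, p z * A z w₁ * A z w₂ = if w₁ = w₂ then q w₁ else 0 := by
  calc ∑ z, p z * A z w₁ * A z w₂
      = ∑ w₃, ∑ z, p z * A z w₁ * A z w₂ * A z w₃ := by
        rw [sum_comm]; simp only [← mul_sum, hrow, mul_one]
    _ = if w₁ = w₂ then q w₁ else 0 := by
        simp only [hT]; split_ifs with h <;> simp [h]

theorem det_ne_zero_of_second_moments (hq : ∀ w, q w ≠ 0)
    (hS : ∀ w₁ w₂, ∑ z, p z * A z w₁ * A z w₂ = if w₁ = w₂ then q w₁ else 0) :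
    A.det ≠ 0 := by
  have hgram : Aᵀ * diagonal p * A = diagonal q := by
    ext w₁ w₂
    simp only [mul_apply, transpose_apply, diagonal_apply, mul_ite, mul_zero, sum_ite_eq',
      mem_univ, if_true, ← hS]
    exact sum_congr rfl fun z _ => by ring
  have hdet := congrArg det hgram
  rw [det_mul, det_mul, det_transpose, det_diagonal, det_diagonal] at hdet
  intro h
  rw [h, zero_mul, zero_mul] at hdet
  exact prod_ne_zero_iff.mpr (fun w _ => hq w) hdet.symm

theorem mul_eq_zero_of_third_moments (hp : ∀ z, p z ≠ 0) (hdet : A.det ≠ 0)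
    (hT : ∀ w₁ w₂ w₃, ∑ z, p z * A z w₁ * A z w₂ * A z w₃
      = if w₁ = w₂ ∧ w₁ = w₃ then q w₁ else 0) ⦃w w' : ι⦄ (hne : w ≠ w') (z : ι) :
    A z w * A z w' = 0 := by
  have hv : Aᵀ *ᵥ (fun z => p z * (A z w * A z w')) = 0 := funext fun w'' => by
    simp only [mulVec, dotProduct, transpose_apply, Pi.zero_apply]
    have := hT w w' w''
    rw [if_neg fun h => hne h.1] at this
    rw [← this]
    exact sum_congr rfl fun z _ => by ring
  have := congrFun (eq_zero_of_mulVec_eq_zero (by rwa [det_transpose]) hv) z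
  exact (mul_eq_zero.mp this).resolve_left (hp z)

theorem exists_perm_eq_permMatrix_of_third_moments (hp : ∀ z, 0 < p z) (hq : ∀ w, 0 < q w)
    (hrow : ∀ z, ∑ w, A z w = 1)
    (hT : ∀ w₁ w₂ w₃, ∑ z, p z * A z w₁ * A z w₂ * A z w₃
      = if w₁ = w₂ ∧ w₁ = w₃ then q w₁ else 0) :
    ∃ σ : Equiv.Perm ι, A = σ.permMatrix ℝ ∧ ∀ z, q (σ z) = p z := by
  have hS := sum_mul_mul_eq_of_third_moments hrow hT
  have hdet := det_ne_zero_of_second_moments (fun w => (hq w).ne') hS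
  have hdisj := mul_eq_zero_of_third_moments (fun z => (hp z).ne') hdet hT
  have hsupp : ∀ z, ∃ w, ∀ w', w' ≠ w → A z w' = 0 := by
    intro z
    obtain ⟨w, -, hw⟩ := exists_ne_zero_of_sum_ne_zero (hrow z ▸ one_ne_zero)
    exact ⟨w, fun w' hne => (mul_eq_zero.mp (hdisj hne z)).resolve_right hw⟩
  choose σ hσ using hsupp
  have hA : ∀ z w, A z w = if σ z = w then 1 else 0 := by
    intro z w
    split_ifs with h
    · rw [← h, ← hrow z, sum_eq_single (σ z) (fun w' _ => hσ z w') (by simp)]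
    · exact hσ z w (Ne.symm h)
  have hsurj : Function.Surjective σ := by
    intro w
    by_contra! hw
    have := hS w w
    simp only [hA, mul_zero, hw, if_false, sum_const_zero] at this
    exact (hq w).ne' this.symm
  have hbij := hsurj.bijective_of_finite
  refine ⟨Equiv.ofBijective σ hbij, ?_, fun z => ?_⟩
  · ext z w
    simp [hA, Equiv.toPEquiv_apply]
  · have := hS (σ z) (σ z)
    simp only [hA, hbij.injective.eq_iff, mul_ite, mul_one, mul_zero] at this
    simpa using this.symm

end Matrix

theorem sum_eq_one_of_tendsto_sum_mul {X R κ : Type*} [Fintype κ] [Ring R] [TopologicalSpace R]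
    [IsTopologicalRing R] [T2Space R] {l : Filter X} [l.NeBot] {f : X → R} {g : κ → X → R}
    {a : κ → R} (hfg : ∀ x, f x = ∑ w, a w * g w x) (hf : Tendsto f l (𝓝 1))
    (hg : ∀ w, Tendsto (g w) l (𝓝 1)) : ∑ w, a w = 1 := by
  have : Tendsto f l (𝓝 (∑ w, a w * 1)) := by
    simpa only [← funext hfg] using tendsto_finsetSum univ fun w _ => (hg w).const_mul (a w)
  simpa using tendsto_nhds_unique this hf

theorem tendsto_atTop_sum_mul_of_isCDF {ι : Type*} [Fintype ι] {F : ι → ℝ → ℝ}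
    (hF : ∀ i, IsCDF (F i)) {w : ι → ℝ} (hw : ∑ i, w i = 1) :
    Tendsto (fun x => ∑ i, F i x * w i) atTop (𝓝 1) := by
  simpa [hw] using tendsto_finsetSum univ fun i _ => (hF i).2.2.2.mul_const (w i)

theorem sbm_nonparametric_identification_general {r : ℕ}
    (p q : Fin r → ℝ)
    (hp : ∀ z, 0 < p z) (hq : ∀ z, 0 < q z)
    (hps : ∑ z, p z = 1) (hqs : ∑ z, q z = 1)
    (F G : Fin r → Fin r → ℝ → ℝ)
    (hFcdf : ∀ z₁ z₂, IsCDF (F z₁ z₂)) (hGcdf : ∀ z₁ z₂, IsCDF (G z₁ z₂))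
    (hFind : LinearIndependent ℝ (fun z => fun x => ∑ z', F z z' x * p z'))
    (hGind : LinearIndependent ℝ (fun z => fun x => ∑ z', G z z' x * q z'))
    (hstar : ∀ x₁ x₂ x₃ : ℝ,
      ∑ z, p z * ((∑ z', F z z' x₁ * p z') * (∑ z', F z z' x₂ * p z')
          * (∑ z', F z z' x₃ * p z'))
        = ∑ z, q z * ((∑ z', G z z' x₁ * q z') * (∑ z', G z z' x₂ * q z')
          * (∑ z', G z z' x₃ * q z')))
    (hpath : ∀ x₁ x₂ x₃ : ℝ,
      ∑ z₁, ∑ z₂, p z₁ * p z₂ * ((∑ z', F z₁ z' x₁ * p z') * F z₁ z₂ x₂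
          * (∑ z', F z₂ z' x₃ * p z'))
        = ∑ z₁, ∑ z₂, q z₁ * q z₂ * ((∑ z', G z₁ z' x₁ * q z') * G z₁ z₂ x₂
          * (∑ z', G z₂ z' x₃ * q z'))) :
    ∃ σ : Equiv.Perm (Fin r),
      (∀ z, q (σ z) = p z) ∧ ∀ z₁ z₂, G (σ z₁) (σ z₂) = F z₁ z₂ := by
  set Fb : Fin r → ℝ → ℝ := fun z x => ∑ z', F z z' x * p z'
  set Gb : Fin r → ℝ → ℝ := fun w x => ∑ w', G w w' x * q w'
  have hspan := hFind.mem_span_of_sum_cube_eq (g := Gb) (fun z => (hp z).ne') q hstar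
  choose A hA using fun z => (mem_span_range_iff_exists_fun ℝ).mp (hspan z)
  have hAx : ∀ z x, Fb z x = ∑ w, A z w * Gb w x := fun z x => by simp [← hA z]
  have hrow : ∀ z, ∑ w, A z w = 1 := fun z =>
    sum_eq_one_of_tendsto_sum_mul (hAx z) (tendsto_atTop_sum_mul_of_isCDF (hFcdf z) hps)
      fun w => tendsto_atTop_sum_mul_of_isCDF (hGcdf w) hqs
  have hT := hGind.sum_mul_mul_mul_eq_of_sum_cube_eq (A := A) (p := p) fun x y t => by
    simp only [← hAx]
    exact hstar x y t
  obtain ⟨σ, rfl, hqp⟩ := Matrix.exists_perm_eq_permMatrix_of_third_moments hp hq hrow hT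
  have hFG : ∀ z x, Fb z x = Gb (σ z) x := fun z x =>
    (hAx z x).trans (congrFun (Matrix.permMatrix_mulVec σ (v := fun w => Gb w x)) z)
  refine ⟨σ, hqp, fun z₁ z₂ => funext fun x => ?_⟩
  have hcoef := hFind.eq_of_forall_sum_sum_mul_eq hFind
    (c := fun i j => p i * p j * G (σ i) (σ j) x) (d := fun i j => p i * p j * F i j x)
    fun x₁ x₃ => calc
      _ = ∑ w₁, ∑ w₂, q w₁ * q w₂ * (Gb w₁ x₁ * G w₁ w₂ x * Gb w₂ x₃) :=
        Fintype.sum_equiv σ _ _ fun i => Fintype.sum_equiv σ _ _ fun j => by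
          rw [hqp, hqp, hFG, hFG]; ring
      _ = ∑ i, ∑ j, p i * p j * (Fb i x₁ * F i j x * Fb j x₃) := (hpath x₁ x x₃).symm
      _ = _ := sum_congr rfl fun i _ => sum_congr rfl fun j _ => by ring
  exact mul_left_cancel₀ (mul_ne_zero (hp z₁).ne' (hp z₂).ne') (congrFun (congrFun hcoef z₁) z₂)

/-- Proposition 1, concrete form: nonparametric identification of the
stochastic block model up to relabeling. Two stochastic block models—given by strictly
positive community proportions `p`, `q` summing to one and symmetric families of
conditional CDFs `F`, `G`, whose marginal component CDFs
`F̄ z = ∑ z', F z z' * p z'` and `Ḡ z = ∑ z', G z z' * q z'` are each linearly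
independent—that generate the same joint distribution of edge weights on three-star
subgraphs and on path subgraphs on four nodes must coincide up to a relabeling of the
latent communities. -/
theorem sbm_nonparametric_identification {r : ℕ}
    (p q : Fin r → ℝ)
    (hp : ∀ z, 0 < p z) (hq : ∀ z, 0 < q z)
    (hps : ∑ z, p z = 1) (hqs : ∑ z, q z = 1)
    (F G : Fin r → Fin r → ℝ → ℝ)
    (hFcdf : ∀ z₁ z₂, IsCDF (F z₁ z₂)) (hGcdf : ∀ z₁ z₂, IsCDF (G z₁ z₂))
    (hFsymm : ∀ z₁ z₂, F z₁ z₂ = F z₂ z₁) (hGsymm : ∀ z₁ z₂, G z₁ z₂ = G z₂ z₁)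
    (hFind : LinearIndependent ℝ (fun z => fun x => ∑ z', F z z' x * p z'))
    (hGind : LinearIndependent ℝ (fun z => fun x => ∑ z', G z z' x * q z'))
    (hstar : ∀ x₁ x₂ x₃ : ℝ,
      ∑ z, p z * ((∑ z', F z z' x₁ * p z') * (∑ z', F z z' x₂ * p z')
          * (∑ z', F z z' x₃ * p z'))
        = ∑ z, q z * ((∑ z', G z z' x₁ * q z') * (∑ z', G z z' x₂ * q z')
          * (∑ z', G z z' x₃ * q z')))
    (hpath : ∀ x₁ x₂ x₃ : ℝ,
      ∑ z₁, ∑ z₂, p z₁ * p z₂ * ((∑ z', F z₁ z' x₁ * p z') * F z₁ z₂ x₂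
          * (∑ z', F z₂ z' x₃ * p z'))
        = ∑ z₁, ∑ z₂, q z₁ * q z₂ * ((∑ z', G z₁ z' x₁ * q z') * G z₁ z₂ x₂
          * (∑ z', G z₂ z' x₃ * q z'))) :
    ∃ σ : Equiv.Perm (Fin r),
      (∀ z, q (σ z) = p z) ∧ ∀ z₁ z₂, G (σ z₁) (σ z₂) = F z₁ z₂ :=
  sbm_nonparametric_identification_general p q hp hq hps hqs F G hFcdf hGcdf hFind hGind hstar hpath
end

section
/- (Kernel smoothing bias bound.) Let k : ℝ → ℝ be a bounded, measurable, symmetric kernel (k(−u) = k(u) for all u) with ∫ k(u) du = 1 and ∫ u² |k(u)| du < ∞, and let f : ℝ → ℝ be an integrable probability density that is twice differentiable with |f''(u)| ≤ B for all u. Then for every x ∈ ℝ and every h > 0, |∫ h⁻¹ k((u − x)/h) f(u) du − f(x)| ≤ (B/2) h² ∫ u² |k(u)| du. In particular the smoothing bias of the kernel density estimator is of order h². -/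
/-!
Substituting `u = x + h t` turns the smoothed density into `∫ k(t) f(x + h t) dt`. Since `k`
integrates to one and, being even, has vanishing first moment, subtracting `f x` amounts to
integrating `k` against the first-order Taylor remainder `f(x + h t) - f x - h t f'(x)`, which is
at most `(B/2) h² t²` in absolute value.
-/

open MeasureTheory

theorem abs_sub_sub_mul_deriv_le_of_abs_deriv2_le {f : ℝ → ℝ} {B : ℝ}
    (hf : Differentiable ℝ f) (hf' : Differentiable ℝ (deriv f))
    (hB : ∀ u, |deriv (deriv f) u| ≤ B) (x s : ℝ) :
    |f (x + s) - f x - s * deriv f x| ≤ B / 2 * s ^ 2 := by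
  have hlip : ∀ a b, |deriv f b - deriv f a| ≤ B * |b - a| := fun a b => by
    simpa only [Real.norm_eq_abs] using convex_univ.norm_image_sub_le_of_norm_deriv_le
      (fun u _ => hf' u) (fun u _ => hB u) (Set.mem_univ a) (Set.mem_univ b)
  have hψ : ∀ t, HasDerivAt (fun t => f (x + t * s) - f x - t * s * deriv f x)
      (s * (deriv f (x + t * s) - deriv f x)) t := fun t => by
    have hline : HasDerivAt (fun t => x + t * s) s t := (hasDerivAt_mul_const s).const_add x
    exact ((((hf _).hasDerivAt.comp t hline).sub_const (f x)).sub
      ((hasDerivAt_mul_const s).mul_const (deriv f x))).congr_deriv (by ring)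
  have hβ : ∀ t, HasDerivAt (fun t => B / 2 * s ^ 2 * t ^ 2) (B * s ^ 2 * t) t := fun t =>
    ((hasDerivAt_pow 2 t).const_mul (B / 2 * s ^ 2)).congr_deriv (by push_cast; ring)
  -- Fence the remainder along `t ↦ x + t * s` by `B / 2 * s ^ 2 * t ^ 2` on `[0, 1]`.
  have hfence := image_norm_le_of_norm_deriv_right_le_deriv_boundary (a := 0) (b := 1)
    (fun t _ => (hψ t).continuousAt.continuousWithinAt) (fun t _ => (hψ t).hasDerivWithinAt)
    (by simp) hβ (fun t ht => ?_) (Set.right_mem_Icc.2 zero_le_one)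
  · simpa using hfence
  · calc ‖s * (deriv f (x + t * s) - deriv f x)‖
        ≤ |s| * (B * |x + t * s - x|) := by
          rw [Real.norm_eq_abs, abs_mul]; gcongr; exact hlip _ _
      _ = B * s ^ 2 * t := by
          rw [add_sub_cancel_left, abs_mul, abs_of_nonneg ht.1, ← sq_abs s]; ring

theorem integral_comp_sub_div {E : Type*} [NormedAddCommGroup E] [NormedSpace ℝ E]
    (g : ℝ → E) (x h : ℝ) : ∫ u, g ((u - x) / h) = |h| • ∫ t, g t := by
  rw [integral_sub_right_eq_self (fun u => g (u / h)) x, Measure.integral_comp_div]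

theorem integrable_mul_of_integrable_sq_mul_abs {k : ℝ → ℝ} (hk : Integrable k)
    (hk_mom : Integrable fun t => t ^ 2 * |k t|) : Integrable fun t => t * k t := by
  refine (hk.abs.add hk_mom).mono' (measurable_id.aestronglyMeasurable.mul hk.1) ?_
  refine Filter.Eventually.of_forall fun t => ?_
  have : |t| ≤ 1 + t ^ 2 := by nlinarith [abs_nonneg t, sq_abs t]
  calc ‖t * k t‖ = |t| * |k t| := by rw [Real.norm_eq_abs, abs_mul]
    _ ≤ (1 + t ^ 2) * |k t| := by gcongr
    _ = |k t| + t ^ 2 * |k t| := by ring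

theorem integral_mul_eq_zero_of_even {k : ℝ → ℝ} (hk_symm : ∀ u, k (-u) = k u) :
    ∫ t, t * k t = 0 := by
  have h := integral_neg_eq_self (fun t => t * k t) volume
  simp only [hk_symm, neg_mul, integral_neg] at h
  linarith

theorem abs_integral_mul_sub_le_of_abs_sub_le {k g : ℝ → ℝ} {a b c : ℝ}
    (hk_symm : ∀ u, k (-u) = k u) (hk_one : ∫ t, k t = 1)
    (hk_mom : Integrable fun t => t ^ 2 * |k t|) (hg : AEStronglyMeasurable g)
    (hg_approx : ∀ t, |g t - a - b * t| ≤ c * t ^ 2) :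
    |(∫ t, k t * g t) - a| ≤ c * ∫ t, t ^ 2 * |k t| := by
  have hk : Integrable k := integrable_of_integral_eq_one hk_one
  have hk_id : Integrable fun t => t * k t := integrable_mul_of_integrable_sq_mul_abs hk hk_mom
  have hrem_le : ∀ t, ‖k t * (g t - a - b * t)‖ ≤ c * (t ^ 2 * |k t|) := fun t => by
    rw [Real.norm_eq_abs, abs_mul]
    nlinarith [hg_approx t, abs_nonneg (k t)]
  have hk_rem : Integrable fun t => k t * (g t - a - b * t) :=
    (hk_mom.const_mul c).mono' (hk.1.mul ((hg.sub aestronglyMeasurable_const).sub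
      (measurable_id.aestronglyMeasurable.const_mul b))) (Filter.Eventually.of_forall hrem_le)
  have hsplit : (fun t => k t * g t)
      = fun t => a * k t + b * (t * k t) + k t * (g t - a - b * t) := by
    funext t; ring
  have hmean : (∫ t, k t * g t) - a = ∫ t, k t * (g t - a - b * t) := by
    have hlin : Integrable fun t => a * k t + b * (t * k t) :=
      (hk.const_mul a).add (hk_id.const_mul b)
    rw [hsplit, integral_add hlin hk_rem,
      integral_add (hk.const_mul a) (hk_id.const_mul b), integral_const_mul, integral_const_mul,
      hk_one, integral_mul_eq_zero_of_even hk_symm]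
    ring
  rw [hmean, ← integral_const_mul, ← Real.norm_eq_abs]
  exact norm_integral_le_of_norm_le (hk_mom.const_mul c) (Filter.Eventually.of_forall hrem_le)

theorem kernel_smoothing_bias_bound_general
    (k f : ℝ → ℝ) (B : ℝ)
    (hk_symm : ∀ u, k (-u) = k u)
    (hk_one : ∫ u, k u = 1)
    (hk_mom : Integrable fun u => u ^ 2 * |k u|)
    (hf_diff : ∀ u, DifferentiableAt ℝ f u)
    (hf_diff2 : ∀ u, DifferentiableAt ℝ (deriv f) u)
    (hf''_bdd : ∀ u, |deriv (deriv f) u| ≤ B) :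
    ∀ (x h : ℝ), 0 < h →
      |(∫ u, h⁻¹ * k ((u - x) / h) * f u) - f x|
        ≤ B / 2 * h ^ 2 * ∫ u, u ^ 2 * |k u| := by
  intro x h hh
  have hrescale : ∫ u, h⁻¹ * k ((u - x) / h) * f u = ∫ t, k t * f (x + h * t) := by
    have hu : ∀ u, h⁻¹ * k ((u - x) / h) * f u
        = h⁻¹ * (k ((u - x) / h) * f (x + h * ((u - x) / h))) := fun u => by
      rw [mul_div_cancel₀ _ hh.ne', add_sub_cancel, mul_assoc]
    simp_rw [hu]
    rw [integral_const_mul, integral_comp_sub_div (fun t => k t * f (x + h * t)),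
      smul_eq_mul, abs_of_pos hh, inv_mul_cancel_left₀ hh.ne']
  have hf_taylor : ∀ t, |f (x + h * t) - f x - h * deriv f x * t| ≤ B / 2 * h ^ 2 * t ^ 2 :=
    fun t => by
      simpa only [mul_pow, mul_assoc, mul_right_comm h t] using
        abs_sub_sub_mul_deriv_le_of_abs_deriv2_le hf_diff hf_diff2 hf''_bdd x (h * t)
  rw [hrescale]
  exact abs_integral_mul_sub_le_of_abs_sub_le hk_symm hk_one hk_mom
    ((Differentiable.continuous hf_diff).comp (by fun_prop)).aestronglyMeasurable hf_taylor

/-- kernel smoothing bias bound. For a bounded measurable symmetric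
kernel `k` integrating to one with finite second absolute moment, and an integrable
probability density `f` that is twice differentiable with `|f''| ≤ B`, the smoothing bias
satisfies, for every `x` and bandwidth `h > 0`,
`|∫ h⁻¹ k((u − x)/h) f u du − f x| ≤ (B/2) h² ∫ u² |k u| du`;
in particular it is of order `h²`. -/
theorem kernel_smoothing_bias_bound
    (k f : ℝ → ℝ) (B : ℝ)
    (hk_meas : Measurable k)
    (hk_bdd : ∃ C, ∀ u, |k u| ≤ C)
    (hk_symm : ∀ u, k (-u) = k u)
    (hk_one : ∫ u, k u = 1)
    (hk_mom : Integrable fun u => u ^ 2 * |k u|)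
    (hf_int : Integrable f)
    (hf_nonneg : ∀ u, 0 ≤ f u)
    (hf_one : ∫ u, f u = 1)
    (hf_diff : ∀ u, DifferentiableAt ℝ f u)
    (hf_diff2 : ∀ u, DifferentiableAt ℝ (deriv f) u)
    (hf''_bdd : ∀ u, |deriv (deriv f) u| ≤ B) :
    ∀ (x h : ℝ), 0 < h →
      |(∫ u, h⁻¹ * k ((u - x) / h) * f u) - f x|
        ≤ B / 2 * h ^ 2 * ∫ u, u ^ 2 * |k u| :=
  kernel_smoothing_bias_bound_general k f B hk_symm hk_one hk_mom hf_diff hf_diff2 hf''_bdd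
end
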